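/- arXiv:1702.08878 — 3 statements merged into one kernel-verified Lean document; each statement's English description precedes it below -/
import Mathlib

section
/- Let Z be a set, F : Z → Z a bijection, φ : Z → (0,∞) any function, and ε > 0. Define ψ : Z → [0,∞] (with values in the extended nonnegative reals) by ψ(z) = sup_{n ∈ ℤ} φ(F^n(z)) e^{-ε|n|}, where F^n for n < 0 denotes the |n|-th iterate of F^{-1}. Then for every z ∈ Z one has e^{-ε} ψ(z) ≤ ψ(F(z)) ≤ e^{ε} ψ(z) in [0,∞]. -/
open Filter

lemma pow_shift {Z : Type*} (F : Equiv.Perm Z) (n : ℤ) (z : Z) :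
    (F ^ (n - 1)) (F z) = (F ^ n) z := by
  have h : (F ^ (n - 1)) * F = F ^ n := by
    rw [zpow_sub_one]; simp [mul_assoc]
  calc (F ^ (n - 1)) (F z) = ((F ^ (n - 1)) * F) z := rfl
    _ = (F ^ n) z := by rw [h]

/-- **Weighted supremum over the orbit is tempered.**
For any bijection `F : Z → Z`, any `φ : Z → (0,∞)` and `ε > 0`, the function
`ψ(z) = ⨆ n : ℤ, φ(Fⁿ z) e^{-ε|n|}` (with values in `[0,∞]`) satisfies
`e^{-ε} ψ(z) ≤ ψ(F z) ≤ e^{ε} ψ(z)` in `[0,∞]`, for every `z`. -/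
theorem weighted_sup_tempered {Z : Type*} (F : Equiv.Perm Z)
    (φ : Z → ℝ) (hφpos : ∀ z, 0 < φ z) (ε : ℝ) (hε : 0 < ε) :
    ∀ z : Z,
      ENNReal.ofReal (Real.exp (-ε)) *
          (⨆ n : ℤ, ENNReal.ofReal (φ ((F ^ n) z) * Real.exp (-(ε * |(n : ℝ)|)))) ≤
        (⨆ n : ℤ, ENNReal.ofReal (φ ((F ^ n) (F z)) * Real.exp (-(ε * |(n : ℝ)|)))) ∧
      (⨆ n : ℤ, ENNReal.ofReal (φ ((F ^ n) (F z)) * Real.exp (-(ε * |(n : ℝ)|)))) ≤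
        ENNReal.ofReal (Real.exp ε) *
          (⨆ n : ℤ, ENNReal.ofReal (φ ((F ^ n) z) * Real.exp (-(ε * |(n : ℝ)|)))) := by
  intro z
  constructor
  · rw [ENNReal.mul_iSup]
    refine iSup_le fun n => ?_
    refine le_trans ?_ (le_iSup _ (n - 1))
    rw [pow_shift, ← ENNReal.ofReal_mul (Real.exp_nonneg _)]
    apply ENNReal.ofReal_le_ofReal
    rw [← mul_assoc, mul_comm (Real.exp (-ε)), mul_assoc, ← Real.exp_add]
    refine mul_le_mul_of_nonneg_left ?_ (hφpos _).le
    apply Real.exp_le_exp.mpr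
    have h1 : |((n : ℝ)) - 1| ≤ |(n : ℝ)| + 1 := by
      calc |(n : ℝ) - 1| ≤ |(n : ℝ)| + |(1 : ℝ)| := abs_sub _ _
        _ = |(n : ℝ)| + 1 := by rw [abs_one]
    push_cast
    nlinarith [h1, hε]
  · rw [ENNReal.mul_iSup]
    refine iSup_le fun n => ?_
    refine le_trans ?_ (le_iSup _ (n + 1))
    have hz : (F ^ n) (F z) = (F ^ (n + 1)) z := by
      have := pow_shift F (n + 1) z
      simpa using this
    rw [hz, ← ENNReal.ofReal_mul (Real.exp_nonneg _)]
    apply ENNReal.ofReal_le_ofReal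
    rw [mul_comm (Real.exp ε), mul_assoc, ← Real.exp_add]
    refine mul_le_mul_of_nonneg_left ?_ (hφpos _).le
    apply Real.exp_le_exp.mpr
    have h1 : |((n : ℝ)) + 1| ≤ |(n : ℝ)| + 1 := by
      calc |(n : ℝ) + 1| ≤ |(n : ℝ)| + |(1 : ℝ)| := abs_add_le _ _
        _ = |(n : ℝ)| + 1 := by rw [abs_one]
    push_cast
    nlinarith [h1, hε]
end

section
/- Let M be a metric space with distance d_M, and equip ℕ → M with the metric d(z, z') = Σ_{n=0}^∞ 2^{-n} min(1, d_M(z(n), z'(n))). Let Z = {z ∈ ℕ → M : f(z(n+1)) = z(n) for all n ≥ 0} be the inverse limit of f : M → M and F : Z → Z the natural extension map. Then for every w, w' ∈ Z lying in the same fiber, i.e. with w(0) = w'(0), and for every n ≥ 0, one has d(F^n(w), F^n(w')) = 2^{-n} d(w, w'). -/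
/-- The inverse limit of `f : M → M`: the space of pre-orbits of `f`. -/
def InvLim {M : Type*} (f : M → M) : Type _ :=
  {z : ℕ → M // ∀ n, f (z (n + 1)) = z n}

/-- The natural extension of `f`, as a bijection of the inverse limit:
`F(z)₀ = f(z₀)` and `F(z)_{n+1} = z_n`; its inverse is the shift. -/
def natExt {M : Type*} (f : M → M) : Equiv.Perm (InvLim f) where
  toFun z :=
    ⟨fun n => match n with
      | 0 => f (z.1 0)
      | k + 1 => z.1 k, by
      intro n
      cases n with
      | zero => rfl
      | succ k => exact z.2 k⟩
  invFun z := ⟨fun n => z.1 (n + 1), fun n => z.2 (n + 1)⟩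
  left_inv z := Subtype.ext (funext fun n => rfl)
  right_inv z := Subtype.ext (funext fun n => by
    cases n with
    | zero => exact z.2 0
    | succ k => rfl)

/-- The metric `d(z,z') = ∑_{n=0}^∞ 2^{-n} min(1, d_M(z_n, z'_n))` on sequences. -/
noncomputable def seqDist {M : Type*} [MetricSpace M] (z z' : ℕ → M) : ℝ :=
  ∑' n : ℕ, (2 : ℝ)⁻¹ ^ n * min 1 (dist (z n) (z' n))

lemma seqDist_summable {M : Type*} [MetricSpace M] (z z' : ℕ → M) :
    Summable (fun n : ℕ => (2 : ℝ)⁻¹ ^ n * min 1 (dist (z n) (z' n))) := by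
  apply Summable.of_nonneg_of_le (fun n => ?_) (fun n => ?_)
    (summable_geometric_of_lt_one (by norm_num) (by norm_num : (2:ℝ)⁻¹ < 1))
  · positivity
  · exact (mul_le_mul_of_nonneg_left (min_le_left _ _) (by positivity)).trans_eq (mul_one _)

lemma natExt_step {M : Type*} [MetricSpace M] (f : M → M)
    (z z' : InvLim f) (hfib : z.1 0 = z'.1 0) :
    seqDist ((natExt f) z).1 ((natExt f) z').1 = (2 : ℝ)⁻¹ * seqDist z.1 z'.1 := by
  have h0 : (2 : ℝ)⁻¹ ^ 0 * min 1 (dist (((natExt f) z).1 0) (((natExt f) z').1 0)) = 0 := by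
    have : ((natExt f) z).1 0 = ((natExt f) z').1 0 := by
      show f (z.1 0) = f (z'.1 0); rw [hfib]
    simp [this]
  rw [seqDist, Summable.tsum_eq_zero_add (seqDist_summable _ _), h0, zero_add]
  have : ∀ k : ℕ, (2 : ℝ)⁻¹ ^ (k + 1) *
      min 1 (dist (((natExt f) z).1 (k + 1)) (((natExt f) z').1 (k + 1))) =
      (2 : ℝ)⁻¹ * ((2 : ℝ)⁻¹ ^ k * min 1 (dist (z.1 k) (z'.1 k))) := by
    intro k
    show (2 : ℝ)⁻¹ ^ (k + 1) * min 1 (dist (z.1 k) (z'.1 k)) = _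
    ring
  simp_rw [this]
  rw [tsum_mul_left]
  rfl

lemma natExt_fib {M : Type*} [MetricSpace M] (f : M → M)
    (w w' : InvLim f) (hfib : w.1 0 = w'.1 0) (n : ℕ) :
    ((⇑(natExt f))^[n] w).1 0 = ((⇑(natExt f))^[n] w').1 0 := by
  induction n with
  | zero => exact hfib
  | succ k ih =>
    rw [Function.iterate_succ_apply', Function.iterate_succ_apply']
    show f (((⇑(natExt f))^[k] w).1 0) = f (((⇑(natExt f))^[k] w').1 0)
    rw [ih]

/-- **Exponential contraction of fibers under the natural extension**
(key computation of the horseshoe lemma, Proposition 4.1 of the paper).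
If `w, w'` lie in the same fiber of the inverse limit (`w₀ = w'₀`), then for every
`n ≥ 0`, `d(Fⁿ w, Fⁿ w') = 2^{-n} d(w, w')`. -/
theorem natExt_contracts_fibers {M : Type*} [MetricSpace M] (f : M → M)
    (w w' : InvLim f) (hfib : w.1 0 = w'.1 0) (n : ℕ) :
    seqDist ((⇑(natExt f))^[n] w).1 ((⇑(natExt f))^[n] w').1 =
      (2 : ℝ)⁻¹ ^ n * seqDist w.1 w'.1 := by
  induction n with
  | zero => simp
  | succ k ih =>
    rw [Function.iterate_succ_apply', Function.iterate_succ_apply',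
      natExt_step f _ _ (natExt_fib f w w' hfib k), ih, pow_succ]
    ring
end

section
/- Let (X, 𝔄) be a measurable space, f : X → X measurable, B ∈ 𝔄, and R : X → ℕ measurable with R(x) ≥ 1 for all x. Define T : X → X by T(x) = f^{R(x)}(x), and assume T(B) ⊆ B. Let μ* be a probability measure on X with μ*(B) = 1 which is T-invariant with ∫ R dμ* < ∞, and let μ = ν / ν(X) where ν(A) = Σ_{j=0}^∞ μ*({x : j < R(x) and f^j(x) ∈ A}). If μ* is ergodic with respect to T, then μ is ergodic with respect to f. -/
open MeasureTheory

/-- The measure `ν(A) = ∑_{j=0}^∞ μ*({x : j < R(x), f^j(x) ∈ A})` coinduced by the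
return-time map `f^R` from the measure `μ*`. -/
noncomputable def coinducedMeasure {X : Type*} [MeasurableSpace X] (f : X → X)
    (R : X → ℕ) (μs : Measure X) : Measure X :=
  Measure.sum fun j : ℕ => Measure.map (f^[j]) (μs.restrict {x | j < R x})

lemma coinducedMeasure_apply {X : Type*} [MeasurableSpace X] {f : X → X}
    (hf : Measurable f) {R : X → ℕ} (hR : Measurable R) (μs : Measure X)
    {s : Set X} (hs : MeasurableSet s) :
    coinducedMeasure f R μs s = ∑' j : ℕ, μs ((f^[j]) ⁻¹' s ∩ {x | j < R x}) := by
  rw [coinducedMeasure, Measure.sum_apply _ hs]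
  refine tsum_congr fun j => ?_
  rw [Measure.map_apply (hf.iterate j) hs,
    Measure.restrict_apply ((hf.iterate j) hs)]

/-- **Ergodicity of the coinduced measure** (Section 1.1 of the paper).
Let `T = f^R` be an induced map with `T(B) ⊆ B`, and let `μ*` be a `T`-invariant
probability with `μ*(B) = 1` and integrable return time. If `μ*` is ergodic for `T`,
then the normalized coinduced measure `μ = ν / ν(X)`, where
`ν(A) = ∑_j μ*({x : j < R(x), f^j(x) ∈ A})`, is ergodic for `f`. -/
theorem coinduced_measure_ergodic {X : Type*} [MeasurableSpace X]
    (f : X → X) (hf : Measurable f)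
    (B : Set X) (hB : MeasurableSet B)
    (R : X → ℕ) (hR : Measurable R) (hR1 : ∀ x, 1 ≤ R x)
    (T : X → X) (hT : ∀ x, T x = f^[R x] x) (hTB : Set.MapsTo T B B)
    (μs : Measure X) [IsProbabilityMeasure μs] (hμsB : μs B = 1)
    (hRint : (∫⁻ x, (R x : ENNReal) ∂μs) < ⊤)
    (herg : Ergodic T μs) :
    Ergodic f ((coinducedMeasure f R μs Set.univ)⁻¹ • coinducedMeasure f R μs) := by
  set ν : Measure X := coinducedMeasure f R μs with hν
  have hTmeas : Measurable T := herg.toMeasurePreserving.measurable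
  have hTmap : Measure.map T μs = μs := herg.toMeasurePreserving.map_eq
  have hRlt : ∀ j : ℕ, MeasurableSet {x | j < R x} := fun j =>
    hR measurableSet_Ioi
  have hReq : ∀ j : ℕ, MeasurableSet {x | R x = j} := fun j =>
    hR (measurableSet_singleton j)
  -- invariance of ν under f
  have hinv : Measure.map f ν = ν := by
    refine Measure.ext fun s hs => ?_
    rw [Measure.map_apply hf hs, hν,
      coinducedMeasure_apply hf hR μs (hf hs),
      coinducedMeasure_apply hf hR μs hs]
    -- abbreviations
    have key : ∀ j : ℕ, (f^[j]) ⁻¹' (f ⁻¹' s) ∩ {x | j < R x}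
        = ((f^[j+1]) ⁻¹' s ∩ {x | j + 1 < R x}) ∪ (T ⁻¹' s ∩ {x | R x = j + 1}) := by
      intro j
      ext x
      simp only [Set.mem_inter_iff, Set.mem_preimage, Set.mem_union, Set.mem_setOf_eq,
        Function.iterate_succ', Function.comp_apply]
      constructor
      · rintro ⟨hxs, hxR⟩
        rcases lt_or_eq_of_le (Nat.succ_le_of_lt hxR) with h | h
        · exact Or.inl ⟨hxs, h⟩
        · refine Or.inr ⟨?_, h.symm⟩
          rw [hT, ← h, Function.iterate_succ_apply']
          exact hxs
      · rintro (⟨hxs, hxR⟩ | ⟨hxs, hxR⟩)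
        · exact ⟨hxs, (Nat.lt_succ_self j).trans hxR⟩
        · refine ⟨?_, by omega⟩
          rw [hT, hxR, Function.iterate_succ_apply'] at hxs
          exact hxs
    have hmeas1 : ∀ j : ℕ, MeasurableSet ((f^[j+1]) ⁻¹' s ∩ {x | j + 1 < R x}) :=
      fun j => ((hf.iterate (j+1)) hs).inter (hRlt (j+1))
    have hmeas2 : ∀ j : ℕ, MeasurableSet (T ⁻¹' s ∩ {x | R x = j + 1}) :=
      fun j => (hTmeas hs).inter (hReq (j+1))
    have hdisj : ∀ j : ℕ,
        Disjoint ((f^[j+1]) ⁻¹' s ∩ {x | j + 1 < R x}) (T ⁻¹' s ∩ {x | R x = j + 1}) := by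
      intro j
      refine Set.disjoint_left.2 ?_
      rintro x ⟨_, hx1⟩ ⟨_, hx2⟩
      simp only [Set.mem_setOf_eq] at hx1 hx2
      omega
    calc ∑' j : ℕ, μs ((f^[j]) ⁻¹' (f ⁻¹' s) ∩ {x | j < R x})
        = ∑' j : ℕ, (μs ((f^[j+1]) ⁻¹' s ∩ {x | j + 1 < R x})
            + μs (T ⁻¹' s ∩ {x | R x = j + 1})) := by
          refine tsum_congr fun j => ?_
          rw [key j, measure_union (hdisj j) (hmeas2 j)]
      _ = (∑' j : ℕ, μs ((f^[j+1]) ⁻¹' s ∩ {x | j + 1 < R x}))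
            + ∑' j : ℕ, μs (T ⁻¹' s ∩ {x | R x = j + 1}) := ENNReal.tsum_add
      _ = (∑' j : ℕ, μs ((f^[j+1]) ⁻¹' s ∩ {x | j + 1 < R x})) + μs s := by
          congr 1
          have hcover : (⋃ j : ℕ, T ⁻¹' s ∩ {x | R x = j + 1}) = T ⁻¹' s := by
            ext x
            simp only [Set.mem_iUnion, Set.mem_inter_iff, Set.mem_setOf_eq]
            constructor
            · rintro ⟨j, hx, _⟩; exact hx
            · intro hx
              exact ⟨R x - 1, hx, by have := hR1 x; omega⟩
          have hpd : Pairwise (Function.onFun Disjoint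
              fun j : ℕ => T ⁻¹' s ∩ {x | R x = j + 1}) := by
            intro i j hij
            refine Set.disjoint_left.2 ?_
            rintro x ⟨_, hx1⟩ ⟨_, hx2⟩
            simp only [Set.mem_setOf_eq] at hx1 hx2
            omega
          rw [← measure_iUnion hpd hmeas2, hcover,
            ← Measure.map_apply hTmeas hs, hTmap]
      _ = μs s + ∑' j : ℕ, μs ((f^[j+1]) ⁻¹' s ∩ {x | j + 1 < R x}) := add_comm _ _
      _ = ∑' j : ℕ, μs ((f^[j]) ⁻¹' s ∩ {x | j < R x}) := by
          conv_rhs => rw [tsum_eq_zero_add' ENNReal.summable]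
          have h0 : (f^[0]) ⁻¹' s ∩ {x | 0 < R x} = s := by
            ext x
            simp only [Function.iterate_zero, Set.preimage_id', Set.mem_inter_iff,
              Set.mem_setOf_eq]
            exact ⟨fun h => h.1, fun h => ⟨h, hR1 x⟩⟩
          rw [h0]
  -- null sets of ν coming from invariant null sets of μs
  have hnull : ∀ s : Set X, MeasurableSet s → f ⁻¹' s = s → μs s = 0 → ν s = 0 := by
    intro s hs hfs hμ0
    have hiter : ∀ j : ℕ, (f^[j]) ⁻¹' s = s := by
      intro j
      induction j with
      | zero => simp
      | succ n ih => rw [Function.iterate_succ, Set.preimage_comp, ih, hfs]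
    rw [hν, coinducedMeasure_apply hf hR μs hs]
    refine ENNReal.tsum_eq_zero.2 fun j => ?_
    rw [hiter j]
    exact measure_mono_null Set.inter_subset_left hμ0
  constructor
  · -- measure preserving
    refine ⟨hf, ?_⟩
    rw [Measure.map_smul, hinv]
  · -- pre-ergodic
    constructor
    intro s hs hfs
    have hTs : T ⁻¹' s = s := by
      have hiter : ∀ j : ℕ, (f^[j]) ⁻¹' s = s := by
        intro j
        induction j with
        | zero => simp
        | succ n ih => rw [Function.iterate_succ, Set.preimage_comp, ih, hfs]
      ext x
      simp only [Set.mem_preimage, hT]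
      constructor
      · intro hx
        have := hiter (R x)
        rw [← this]; exact hx
      · intro hx
        have := hiter (R x)
        rw [← this] at hx; exact hx
    rw [Filter.eventuallyConst_set']
    rcases herg.toPreErgodic.ae_empty_or_univ hs hTs with h | h
    · left
      rw [MeasureTheory.ae_eq_empty] at h ⊢
      have : ν s = 0 := hnull s hs hfs h
      simp [Measure.smul_apply, hs, this]
    · right
      rw [ae_eq_univ] at h ⊢
      have hfsc : f ⁻¹' sᶜ = sᶜ := by rw [Set.preimage_compl, hfs]
      have : ν sᶜ = 0 := hnull sᶜ hs.compl hfsc h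
      simp [Measure.smul_apply, this]
end
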